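/- arXiv:1308.0911 — 3 statements merged into one kernel-verified Lean document; each statement's English description precedes it below -/
import Mathlib

section
/- (Theorem on parameters, part 3.) Under the fixed parameters and the sequence definitions below, for every integer ℓ ≥ 0 and every β ∈ [0, α₊]: A^{(∞)}(ε^{(ℓ)}, β) ≤ 3·10⁴·(ρ e^{−β})^{−2} and A^{(0)}(ε^{(ℓ)}, β) ≤ 3·10⁶·(ρ e^{−β})^{−2}. -/
/-- The quantity `𝒢_α(ε_I, ε_Z, ε_F)` from the paper. -/
noncomputable def Gfun (ρ α εI εZ εF : ℝ) : ℝ :=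
  3 * (min α 1 * εI ^ 2 / (Real.exp (-α) * ρ)) *
    (2 + 3 / (Real.exp (-α) * ρ) * (εZ + εI))

/-- Membership `(ε_I, ε_Z, ε_F) ∈ E_α` (with parameters `ρ`, `α₊`, `ι`). -/
def memE (ρ αp ι α εI εZ εF : ℝ) : Prop :=
  1 / 3 < (1 - εF) - 1 / 2 * Real.exp (1 / 10) - εI * (ρ * Real.exp (-αp))⁻¹ ∧
  εI * (ρ * Real.exp (-α))⁻¹ < 1 / (3 * 2 ^ 4) ∧
  Gfun ρ α εI εZ εF < 1 ∧
  3 * Real.exp α * εI ^ 2 / ((1 - Gfun ρ α εI εZ εF) * (Real.exp (-α) * ρ)) <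
    (1 - ι) / 2 * ρ

/-- `|α|_j := μ (α₁ + ⋯ + α_j)`, with `|α|₀ = 0`. -/
noncomputable def normA (μ : ℝ) (a : ℕ → ℝ) (j : ℕ) : ℝ :=
  μ * ∑ i ∈ Finset.range j, a (i + 1)

/-- The sequence `ε_Z^{(ℓ)}`, with `ε_Z^{(0)} = 1`. -/
noncomputable def epsZ (μ : ℝ) (a : ℕ → ℝ) (ℓ : ℕ) : ℝ :=
  if ℓ = 0 then 1 else
    (∏ j ∈ Finset.range ℓ,
        (1 - (10 : ℝ) ^ (-12 : ℤ) * Real.exp (-(normA μ a j) / 2))⁻¹) +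
      (10 : ℝ) ^ (-7 : ℤ) * ∑ j ∈ Finset.range ℓ,
        Real.exp (-(normA μ a j) / 2) *
          ∏ l ∈ Finset.Icc j (ℓ - 1),
            (1 - (10 : ℝ) ^ (-12 : ℤ) * Real.exp (-(normA μ a l) / 2))⁻¹

/-- The sequence `ε_F^{(ℓ)}`. -/
noncomputable def epsF (μ : ℝ) (a : ℕ → ℝ) (εF0 : ℝ) (ℓ : ℕ) : ℝ :=
  εF0 + (10 : ℝ) ^ (-7 : ℤ) * ∑ j ∈ Finset.range ℓ, Real.exp (-(normA μ a j) / 2)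

/-- The sequence `ε_I^{(ℓ)}`. -/
noncomputable def epsI (μ : ℝ) (a : ℕ → ℝ) (εI0 : ℝ) (ℓ : ℕ) : ℝ :=
  εI0 * Real.exp (-(normA μ a ℓ) / 4)


/-- The quantity `A^{(∞)}(ε, α)` from the paper. -/
noncomputable def Ainf (ρ α εI εZ : ℝ) : ℝ :=
  (2 + εZ) *
    (3 * (3 * (Real.exp (-α) * ρ)⁻¹) ^ 2 * (2 ^ 4) ^ 2 /
      (1 - εI * (3 * (Real.exp (-α) * ρ)⁻¹) * 2 ^ 4) ^ 2)

/-- The quantity `A^{(0)}(ε, α)` from the paper. -/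
noncomputable def Azero (ρ α εI : ℝ) : ℝ :=
  128 * Real.pi *
    (3 * (3 * (Real.exp (-α) * ρ)⁻¹) ^ 2 * (2 ^ 4) ^ 2 /
      (1 - εI * (3 * (Real.exp (-α) * ρ)⁻¹) * 2 ^ 4) ^ 2)

/-!
Since `α_j ≥ 6/μ`, the exponents grow linearly, `|α|_j ≥ 6j`, so the weights `e^{-|α|_j/2}` are
dominated by `2^{-j}` and sum to at most `2`. Hence the product in `ε_Z^{(ℓ)}` stays below
`exp (4·10^{-12}) ≤ 2` and `ε_Z^{(ℓ)} ≤ 9/4`, uniformly in `ℓ`. On the other side `ε_I^{(ℓ)} ≤ ε_I^{(0)}`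
is so small against `(e^{-β}ρ)^{-1} ≤ e^{α₊}/ρ` that the denominators of `A^{(∞)}` and `A^{(0)}` are
close to `1`; their common factor is then at most `7000 (ρe^{-β})^{-2}`, and `(2 + 9/4)·7000 ≤ 3·10⁴`,
`128π·7000 ≤ 3·10⁶`.
-/

open Real Finset

lemma inv_one_sub_le_one_add_two_mul {x : ℝ} (hx0 : 0 ≤ x) (hx : x ≤ 1 / 2) :
    (1 - x)⁻¹ ≤ 1 + 2 * x := by
  rw [inv_le_iff_one_le_mul₀ (by linarith)]
  nlinarith

lemma prod_inv_one_sub_le_exp {ι : Type*} (s : Finset ι) {x : ι → ℝ} (hx0 : ∀ i, 0 ≤ x i)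
    (hx : ∀ i, x i ≤ 1 / 2) : ∏ i ∈ s, (1 - x i)⁻¹ ≤ exp (2 * ∑ i ∈ s, x i) :=
  calc ∏ i ∈ s, (1 - x i)⁻¹
      ≤ ∏ i ∈ s, (1 + 2 * x i) :=
        prod_le_prod (fun i _ ↦ inv_nonneg.2 (by linarith [hx i]))
          fun i _ ↦ inv_one_sub_le_one_add_two_mul (hx0 i) (hx i)
    _ ≤ exp (∑ i ∈ s, 2 * x i) := prod_one_add_le_exp_sum s fun i ↦ by linarith [hx0 i]
    _ = exp (2 * ∑ i ∈ s, x i) := by rw [mul_sum]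

lemma exp_neg_div_two_le_half_pow {T : ℝ} {n : ℕ} (hT : 2 * (n : ℝ) ≤ T) :
    exp (-T / 2) ≤ (1 / 2) ^ n :=
  calc exp (-T / 2) ≤ exp (-1 * n) := exp_le_exp.2 (by linarith)
    _ = exp (-1) ^ n := exp_nat_mul (-1) n ▸ by rw [mul_comm]
    _ ≤ (1 / 2) ^ n := pow_le_pow_left₀ (exp_nonneg _) exp_neg_one_lt_half.le n

lemma sum_exp_neg_div_two_le_two {T : ℕ → ℝ} (hT : ∀ j : ℕ, 2 * (j : ℝ) ≤ T j) (n : ℕ) :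
    ∑ j ∈ range n, exp (-T j / 2) ≤ 2 :=
  (sum_le_sum fun j _ ↦ exp_neg_div_two_le_half_pow (hT j)).trans (sum_geometric_two_le n)

lemma le_normA {μ c : ℝ} {a : ℕ → ℝ} (hμ : 0 ≤ μ) (ha : ∀ j : ℕ, 1 ≤ j → c ≤ a j) (n : ℕ) :
    μ * c * n ≤ normA μ a n := by
  have : (range n).card • c ≤ ∑ i ∈ range n, a (i + 1) :=
    card_nsmul_le_sum _ _ _ fun i _ ↦ ha (i + 1) (Nat.le_add_left 1 i)
  rw [card_range, nsmul_eq_mul] at this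
  unfold normA
  nlinarith

section Sequences

variable {μ : ℝ} {a : ℕ → ℝ}

lemma epsZ_le (hnorm : ∀ j : ℕ, 2 * (j : ℝ) ≤ normA μ a j) (ℓ : ℕ) : epsZ μ a ℓ ≤ 9 / 4 := by
  set q : ℕ → ℝ := fun j ↦ exp (-normA μ a j / 2)
  set x : ℕ → ℝ := fun j ↦ (10 : ℝ) ^ (-12 : ℤ) * q j
  have hδ : (10 : ℝ) ^ (-12 : ℤ) = 1 / 10 ^ 12 := by norm_num
  have hq0 (j : ℕ) : 0 ≤ q j := exp_nonneg _
  have hq1 (j : ℕ) : q j ≤ 1 :=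
    (exp_neg_div_two_le_half_pow (hnorm j)).trans (pow_le_one₀ (by norm_num) (by norm_num))
  have hsum : ∑ j ∈ range ℓ, q j ≤ 2 := sum_exp_neg_div_two_le_two hnorm ℓ
  have hx0 (j : ℕ) : 0 ≤ x j := by simp only [x, hδ]; nlinarith [hq0 j]
  have hx1 (j : ℕ) : x j ≤ 1 / 2 := by simp only [x, hδ]; nlinarith [hq1 j]
  have hf1 (j : ℕ) : 1 ≤ (1 - x j)⁻¹ :=
    (one_le_inv₀ (by linarith [hx1 j])).2 (by linarith [hx0 j])
  have hP : ∏ j ∈ range ℓ, (1 - x j)⁻¹ ≤ 2 := by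
    have hxsum : 2 * ∑ j ∈ range ℓ, x j ≤ 1 / 2 := by
      simp only [x, ← mul_sum, hδ]
      linarith
    calc ∏ j ∈ range ℓ, (1 - x j)⁻¹
        ≤ exp (2 * ∑ j ∈ range ℓ, x j) := prod_inv_one_sub_le_exp _ hx0 hx1
      _ ≤ 1 / (1 - 2 * ∑ j ∈ range ℓ, x j) :=
          exp_bound_div_one_sub_of_interval
            (mul_nonneg zero_le_two (sum_nonneg fun j _ ↦ hx0 j)) (by linarith)
      _ ≤ 1 / (1 - 1 / 2) := one_div_le_one_div_of_le (by linarith) (by linarith)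
      _ = 2 := by norm_num
  unfold epsZ
  split_ifs with hℓ
  · norm_num
  have hIcc (j : ℕ) : ∏ l ∈ Icc j (ℓ - 1), (1 - x l)⁻¹ ≤ ∏ l ∈ range ℓ, (1 - x l)⁻¹ :=
    prod_le_prod_of_subset_of_one_le
      (fun l hl ↦ by simp only [mem_Icc, mem_range] at hl ⊢; omega)
      (fun l _ ↦ zero_le_one.trans (hf1 l)) fun l _ _ ↦ hf1 l
  calc _ ≤ ∏ j ∈ range ℓ, (1 - x j)⁻¹ +
        (10 : ℝ) ^ (-7 : ℤ) * ∑ j ∈ range ℓ, q j * ∏ l ∈ range ℓ, (1 - x l)⁻¹ := by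
        gcongr ∏ j ∈ range ℓ, (1 - x j)⁻¹ + _ * ∑ j ∈ range ℓ, q j * ?_ with j
        exact hIcc j
    _ = (∏ j ∈ range ℓ, (1 - x j)⁻¹) * (1 + (10 : ℝ) ^ (-7 : ℤ) * ∑ j ∈ range ℓ, q j) := by
        rw [← sum_mul]; ring
    _ ≤ 2 * (1 + 1 / 10 ^ 7 * 2) := by
        gcongr
        norm_num
    _ ≤ 9 / 4 := by norm_num

lemma epsI_le {εI0 : ℝ} (hεI0 : 0 ≤ εI0) {ℓ : ℕ} (hℓ : 0 ≤ normA μ a ℓ) :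
    epsI μ a εI0 ℓ ≤ εI0 :=
  mul_le_of_le_one_right hεI0 (exp_le_one_iff.2 (by linarith))

end Sequences

lemma mul_inv_exp_neg_mul_le {ρ β αp ε : ℝ} (hρ0 : 0 < ρ) (hρ1 : ρ ≤ 1) (hβ0 : 0 ≤ β)
    (hβ : β ≤ αp) (hε : ε ≤ 1 / 2 * (10 : ℝ) ^ (-7 : ℤ) * exp (-2 * αp) * ρ ^ 2) :
    ε * (exp (-β) * ρ)⁻¹ ≤ 1 / 10 ^ 5 := by
  have hX : (exp (-β) * ρ)⁻¹ ≤ exp αp / ρ := by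
    rw [mul_inv, ← exp_neg, neg_neg, div_eq_mul_inv]
    gcongr
  have hexp : exp (-2 * αp) * exp αp ≤ 1 := by
    rw [← exp_add, exp_le_one_iff]; linarith
  calc ε * (exp (-β) * ρ)⁻¹
      ≤ 1 / 2 * (10 : ℝ) ^ (-7 : ℤ) * exp (-2 * αp) * ρ ^ 2 * (exp αp / ρ) :=
        mul_le_mul hε hX (by positivity) (by positivity)
    _ = 1 / 2 * (10 : ℝ) ^ (-7 : ℤ) * (exp (-2 * αp) * exp αp) * ρ := by
        field_simp
    _ ≤ 1 / 2 * (10 : ℝ) ^ (-7 : ℤ) * 1 * 1 := by gcongr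
    _ ≤ 1 / 10 ^ 5 := by norm_num

lemma factor_div_one_sub_sq_le {ε X : ℝ} (h : ε * X ≤ 1 / 10 ^ 5) :
    3 * (3 * X) ^ 2 * (2 ^ 4) ^ 2 / (1 - ε * (3 * X) * 2 ^ 4) ^ 2 ≤ 7000 * X ^ 2 := by
  have hden : 99 / 100 ≤ (1 - ε * (3 * X) * 2 ^ 4) ^ 2 := by nlinarith
  rw [div_le_iff₀ (by linarith)]
  nlinarith [sq_nonneg X]

lemma Ainf_le {ρ α εI εZ : ℝ} (hεI : εI * (exp (-α) * ρ)⁻¹ ≤ 1 / 10 ^ 5) (hεZ : εZ ≤ 9 / 4) :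
    Ainf ρ α εI εZ ≤ 3 * 10 ^ 4 * (ρ * exp (-α))⁻¹ ^ 2 := by
  have hK := factor_div_one_sub_sq_le hεI
  rw [Ainf, mul_comm ρ]
  calc (2 + εZ) * _ ≤ (2 + 9 / 4) * (7000 * (exp (-α) * ρ)⁻¹ ^ 2) :=
        mul_le_mul (by linarith) hK (by positivity) (by norm_num)
    _ ≤ _ := by nlinarith [sq_nonneg (exp (-α) * ρ)⁻¹]

lemma Azero_le {ρ α εI : ℝ} (hεI : εI * (exp (-α) * ρ)⁻¹ ≤ 1 / 10 ^ 5) :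
    Azero ρ α εI ≤ 3 * 10 ^ 6 * (ρ * exp (-α))⁻¹ ^ 2 := by
  have hK := factor_div_one_sub_sq_le hεI
  rw [Azero, mul_comm ρ]
  calc 128 * π * _ ≤ 128 * 3.15 * (7000 * (exp (-α) * ρ)⁻¹ ^ 2) :=
        mul_le_mul (by linarith [pi_lt_d2]) hK (by positivity) (by norm_num)
    _ ≤ _ := by nlinarith [sq_nonneg (exp (-α) * ρ)⁻¹]

theorem parameters_A_bounds_general
    (μ ρ αp αm : ℝ) (a : ℕ → ℝ) (εI0 : ℝ)
    (hμ : μ ∈ Set.Ioo (0 : ℝ) 1) (hρ : ρ = 1 / 144)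
    (hαm : 6 / μ ≤ αm)
    (ha : ∀ j : ℕ, 1 ≤ j → αm ≤ a j ∧ a j ≤ αp)
    (hεI0 : 0 < εI0)
    (hεI0' : εI0 ≤ 1 / 2 * (10 : ℝ) ^ (-7 : ℤ) * Real.exp (-2 * αp) * ρ ^ 2) :
    ∀ ℓ : ℕ, ∀ β ∈ Set.Icc (0 : ℝ) αp,
      Ainf ρ β (epsI μ a εI0 ℓ) (epsZ μ a ℓ) ≤ 3 * 10 ^ 4 * (ρ * Real.exp (-β))⁻¹ ^ 2 ∧
      Azero ρ β (epsI μ a εI0 ℓ) ≤ 3 * 10 ^ 6 * (ρ * Real.exp (-β))⁻¹ ^ 2 := by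
  have hnorm (j : ℕ) : 2 * (j : ℝ) ≤ normA μ a j := by
    have h6 : 6 ≤ μ * αm := (div_le_iff₀' hμ.1).1 hαm
    have := le_normA hμ.1.le (fun i hi ↦ (ha i hi).1) j
    nlinarith [j.cast_nonneg (α := ℝ)]
  intro ℓ β ⟨hβ0, hβ⟩
  have hρ0 : 0 < ρ := by rw [hρ]; norm_num
  have hεI : epsI μ a εI0 ℓ * (exp (-β) * ρ)⁻¹ ≤ 1 / 10 ^ 5 :=
    mul_inv_exp_neg_mul_le hρ0 (by rw [hρ]; norm_num) hβ0 hβ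
      ((epsI_le hεI0.le (by linarith [hnorm ℓ, ℓ.cast_nonneg (α := ℝ)])).trans hεI0')
  exact ⟨Ainf_le hεI (epsZ_le hnorm ℓ), Azero_le hεI⟩

/-- (Theorem on parameters, part 3.)  For every `ℓ ≥ 0` and every
`β ∈ [0, α₊]`: `A^{(∞)}(ε^{(ℓ)}, β) ≤ 3·10⁴ (ρ e^{-β})⁻²` and
`A^{(0)}(ε^{(ℓ)}, β) ≤ 3·10⁶ (ρ e^{-β})⁻²`. -/
theorem parameters_A_bounds
    (μ ρ αp ι αm : ℝ) (a : ℕ → ℝ) (εF0 εI0 : ℝ)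
    (hμ : μ ∈ Set.Ioo (0 : ℝ) 1) (hρ : ρ = 1 / 144)
    (hαp : 6 / μ < αp) (hι : ι = 1 - 1 / (10 * αp))
    (hαm : 6 / μ ≤ αm) (hαmp : αm < αp)
    (ha : ∀ j : ℕ, 1 ≤ j → αm ≤ a j ∧ a j ≤ αp)
    (hεF0 : 0 < εF0) (hεF0' : εF0 ≤ 1 / 10 * (1 - 1 / 2 * Real.exp (1 / 10)))
    (hεI0 : 0 < εI0)
    (hεI0' : εI0 ≤ 1 / 2 * (10 : ℝ) ^ (-7 : ℤ) * Real.exp (-2 * αp) * ρ ^ 2) :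
    ∀ ℓ : ℕ, ∀ β ∈ Set.Icc (0 : ℝ) αp,
      Ainf ρ β (epsI μ a εI0 ℓ) (epsZ μ a ℓ) ≤ 3 * 10 ^ 4 * (ρ * Real.exp (-β))⁻¹ ^ 2 ∧
      Azero ρ β (epsI μ a εI0 ℓ) ≤ 3 * 10 ^ 6 * (ρ * Real.exp (-β))⁻¹ ^ 2 :=
  parameters_A_bounds_general μ ρ αp αm a εI0 hμ hρ hαm ha hεI0 hεI0'
end

section
/- (Uniform bounds on the parameter sequences.) Under the fixed parameters and the sequence definitions below, for every integer ℓ ≥ 0: ε_Z^{(ℓ)} ≤ 2 and ε_F^{(ℓ)} ≤ ε_F^{(0)} + 2·10^{−7}. -/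
theorem one_sub_sum_le_prod_one_sub {ι R : Type*} [CommRing R] [PartialOrder R]
    [IsOrderedRing R] (s : Finset ι) {f : ι → R} (h0 : ∀ i ∈ s, 0 ≤ f i)
    (h1 : ∀ i ∈ s, f i ≤ 1) : 1 - ∑ i ∈ s, f i ≤ ∏ i ∈ s, (1 - f i) := by
  classical
  induction s using Finset.induction_on with
  | empty => simp
  | insert i s hi ih =>
    rw [Finset.sum_insert hi, Finset.prod_insert hi]
    have hfi : 0 ≤ 1 - f i := sub_nonneg.2 (h1 i (s.mem_insert_self i))
    have ih := ih (fun j hj ↦ h0 j (Finset.mem_insert_of_mem hj))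
      (fun j hj ↦ h1 j (Finset.mem_insert_of_mem hj))
    have hcross : 0 ≤ f i * ∑ j ∈ s, f j := mul_nonneg (h0 i (s.mem_insert_self i))
      (Finset.sum_nonneg fun j hj ↦ h0 j (Finset.mem_insert_of_mem hj))
    calc 1 - (f i + ∑ j ∈ s, f j) ≤ (1 - f i) * (1 - ∑ j ∈ s, f j) := by
          linear_combination hcross
      _ ≤ (1 - f i) * ∏ j ∈ s, (1 - f j) := mul_le_mul_of_nonneg_left ih hfi

theorem prod_inv_one_sub_le_inv_one_sub_sum {ι K : Type*} [Field K] [LinearOrder K]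
    [IsStrictOrderedRing K] (s : Finset ι) {f : ι → K} (h0 : ∀ i ∈ s, 0 ≤ f i)
    (h1 : ∀ i ∈ s, f i ≤ 1) (hsum : ∑ i ∈ s, f i < 1) :
    ∏ i ∈ s, (1 - f i)⁻¹ ≤ (1 - ∑ i ∈ s, f i)⁻¹ := by
  rw [Finset.prod_inv_distrib]
  exact inv_anti₀ (sub_pos.2 hsum) (one_sub_sum_le_prod_one_sub s h0 h1)

theorem mul_natCast_le_normA {μ c : ℝ} {a : ℕ → ℝ} (hμ : 0 ≤ μ) (ha : ∀ j, 1 ≤ j → c ≤ a j)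
    (j : ℕ) :
    μ * c * j ≤ normA μ a j := by
  have hsum : j * c ≤ ∑ i ∈ Finset.range j, a (i + 1) := by
    simpa using Finset.card_nsmul_le_sum (Finset.range j) (fun i ↦ a (i + 1)) c
      fun i _ ↦ ha (i + 1) (Nat.le_add_left 1 i)
  calc μ * c * j = μ * (j * c) := by ring
    _ ≤ normA μ a j := mul_le_mul_of_nonneg_left hsum hμ

section GeometricDecay

variable {μ : ℝ} {a : ℕ → ℝ}

theorem exp_neg_normA_half_le (hgrowth : ∀ j : ℕ, 6 * (j : ℝ) ≤ normA μ a j) (j : ℕ) :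
    Real.exp (-(normA μ a j) / 2) ≤ Real.exp (-3) ^ j := by
  rw [← Real.exp_nat_mul, Real.exp_le_exp]
  linarith [hgrowth j]

theorem sum_exp_neg_normA_half_le (hgrowth : ∀ j : ℕ, 6 * (j : ℝ) ≤ normA μ a j) (ℓ : ℕ) :
    ∑ j ∈ Finset.range ℓ, Real.exp (-(normA μ a j) / 2) ≤ 2 := by
  have hexp3 : Real.exp (-3) ≤ 1 / 2 := by
    rw [Real.exp_neg, inv_le_comm₀ (Real.exp_pos 3) (by norm_num)]
    linarith [Real.add_one_le_exp 3]
  calc ∑ j ∈ Finset.range ℓ, Real.exp (-(normA μ a j) / 2)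
      ≤ ∑ j ∈ Finset.range ℓ, Real.exp (-3) ^ j :=
        Finset.sum_le_sum fun j _ ↦ exp_neg_normA_half_le hgrowth j
    _ ≤ 1 / (1 - Real.exp (-3)) := by
        rw [Finset.range_eq_Ico, ← pow_zero (Real.exp (-3))]
        exact geom_sum_Ico_le_of_lt_one (Real.exp_pos _).le (by linarith)
    _ ≤ 2 := by
        rw [div_le_iff₀ (by linarith)]
        linarith

theorem prod_inv_one_sub_exp_neg_normA_le (hgrowth : ∀ j : ℕ, 6 * (j : ℝ) ≤ normA μ a j)
    {ℓ : ℕ} {s : Finset ℕ} (hs : s ⊆ Finset.range ℓ) :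
    ∏ l ∈ s, (1 - (10 : ℝ) ^ (-12 : ℤ) * Real.exp (-(normA μ a l) / 2))⁻¹ ≤
      (1 - 2 * (10 : ℝ) ^ (-12 : ℤ))⁻¹ := by
  have hexp_le_one (l : ℕ) : Real.exp (-(normA μ a l) / 2) ≤ 1 :=
    (exp_neg_normA_half_le hgrowth l).trans (pow_le_one₀ (Real.exp_pos _).le
      (Real.exp_le_one_iff.2 (by norm_num)))
  have hsum : ∑ l ∈ s, (10 : ℝ) ^ (-12 : ℤ) * Real.exp (-(normA μ a l) / 2) ≤
      2 * (10 : ℝ) ^ (-12 : ℤ) := by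
    rw [← Finset.mul_sum, mul_comm]
    gcongr
    exact (Finset.sum_le_sum_of_subset_of_nonneg hs fun l _ _ ↦ (Real.exp_pos _).le).trans
      (sum_exp_neg_normA_half_le hgrowth ℓ)
  refine (prod_inv_one_sub_le_inv_one_sub_sum s (fun l _ ↦ by positivity)
    (fun l _ ↦ ?_) (hsum.trans_lt (by norm_num))).trans ?_
  · nlinarith [hexp_le_one l, (by norm_num : (10 : ℝ) ^ (-12 : ℤ) ≤ 1)]
  · exact inv_anti₀ (by norm_num) (by linarith)

theorem epsZ_le_two (hgrowth : ∀ j : ℕ, 6 * (j : ℝ) ≤ normA μ a j) (ℓ : ℕ) :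
    epsZ μ a ℓ ≤ 2 := by
  rcases Nat.eq_zero_or_pos ℓ with rfl | hℓ
  · norm_num [epsZ]
  set P : ℝ := (1 - 2 * (10 : ℝ) ^ (-12 : ℤ))⁻¹
  have hP : 0 ≤ P := by norm_num [P]
  have hterms : ∑ j ∈ Finset.range ℓ, Real.exp (-(normA μ a j) / 2) *
        ∏ l ∈ Finset.Icc j (ℓ - 1),
          (1 - (10 : ℝ) ^ (-12 : ℤ) * Real.exp (-(normA μ a l) / 2))⁻¹ ≤ 2 * P :=
    calc _ ≤ ∑ j ∈ Finset.range ℓ, Real.exp (-(normA μ a j) / 2) * P := by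
          gcongr with j hj
          refine prod_inv_one_sub_exp_neg_normA_le hgrowth (ℓ := ℓ) fun l hl ↦ ?_
          simp only [Finset.mem_Icc, Finset.mem_range] at hl ⊢
          omega
      _ ≤ 2 * P := by
          rw [← Finset.sum_mul]
          exact mul_le_mul_of_nonneg_right (sum_exp_neg_normA_half_le hgrowth ℓ) hP
  rw [epsZ, if_neg hℓ.ne']
  calc _ ≤ P + (10 : ℝ) ^ (-7 : ℤ) * (2 * P) := by
        gcongr
        exact prod_inv_one_sub_exp_neg_normA_le hgrowth subset_rfl
    _ ≤ 2 := by norm_num [P]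

theorem epsF_le (hgrowth : ∀ j : ℕ, 6 * (j : ℝ) ≤ normA μ a j) (εF0 : ℝ) (ℓ : ℕ) :
    epsF μ a εF0 ℓ ≤ εF0 + 2 * (10 : ℝ) ^ (-7 : ℤ) := by
  rw [epsF, mul_comm 2]
  gcongr
  exact sum_exp_neg_normA_half_le hgrowth ℓ

end GeometricDecay

theorem parameters_uniform_bounds_general
    (μ αp αm : ℝ) (a : ℕ → ℝ) (εF0 : ℝ)
    (hμ : μ ∈ Set.Ioo (0 : ℝ) 1)
    (hαm : 6 / μ ≤ αm)
    (ha : ∀ j : ℕ, 1 ≤ j → αm ≤ a j ∧ a j ≤ αp) :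
    ∀ ℓ : ℕ,
      epsZ μ a ℓ ≤ 2 ∧
      epsF μ a εF0 ℓ ≤ εF0 + 2 * (10 : ℝ) ^ (-7 : ℤ) := by
  have hμαm : 6 ≤ μ * αm := by rwa [div_le_iff₀' hμ.1] at hαm
  have hgrowth (j : ℕ) : 6 * (j : ℝ) ≤ normA μ a j :=
    (mul_le_mul_of_nonneg_right hμαm j.cast_nonneg).trans
      (mul_natCast_le_normA hμ.1.le (fun i hi ↦ (ha i hi).1) j)
  exact fun ℓ ↦ ⟨epsZ_le_two hgrowth ℓ, epsF_le hgrowth εF0 ℓ⟩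

/-- (Uniform bounds on the parameter sequences.)  For every
`ℓ ≥ 0`: `ε_Z^{(ℓ)} ≤ 2` and `ε_F^{(ℓ)} ≤ ε_F^{(0)} + 2·10⁻⁷`. -/
theorem parameters_uniform_bounds
    (μ ρ αp ι αm : ℝ) (a : ℕ → ℝ) (εF0 εI0 : ℝ)
    (hμ : μ ∈ Set.Ioo (0 : ℝ) 1) (hρ : ρ = 1 / 144)
    (hαp : 6 / μ < αp) (hι : ι = 1 - 1 / (10 * αp))
    (hαm : 6 / μ ≤ αm) (hαmp : αm < αp)
    (ha : ∀ j : ℕ, 1 ≤ j → αm ≤ a j ∧ a j ≤ αp)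
    (hεF0 : 0 < εF0) (hεF0' : εF0 ≤ 1 / 10 * (1 - 1 / 2 * Real.exp (1 / 10)))
    (hεI0 : 0 < εI0)
    (hεI0' : εI0 ≤ 1 / 2 * (10 : ℝ) ^ (-7 : ℤ) * Real.exp (-2 * αp) * ρ ^ 2) :
    ∀ ℓ : ℕ,
      epsZ μ a ℓ ≤ 2 ∧
      epsF μ a εF0 ℓ ≤ εF0 + 2 * (10 : ℝ) ^ (-7 : ℤ) :=
  parameters_uniform_bounds_general μ αp αm a εF0 hμ hαm ha
end

section
/- (Simplex integral estimate.) Let μ ∈ (0,1), ρ > 0, and let M ≥ 1 be an integer. Then ∫_{{(y¹,…,y^M) ∈ (ℝ³)^M : Σ_{i=1}^M |yⁱ| ≤ ρ}} ∏_{i=1}^M |yⁱ|^{μ−1} dy¹⋯dy^M ≤ (4π)^M · ρ^{(2+μ)M} / (M!)². -/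
/-!
Induction on the number `n` of variables. By Tonelli, the integral `I_{n+1}(t)` over the simplex
of radius `t` equals `∫_{ℝ³} |x|^{μ-1} I_n(t - |x|) dx`, which in polar coordinates is
`4π ∫_0^t r^{1+μ} I_n(t - r) dr`. Bounding `r^μ ≤ t^μ` and inserting the inductive bound
`I_n(s) ≤ C_n s^β`, `β = (2+μ)n`, leaves the Beta integral
`∫_0^t r (t-r)^β dr = t^{β+2} / ((β+1)(β+2))`, and `(β+1)(β+2) ≥ (n+1)²` produces the factor
`1/(n+1)²` of `1/((n+1)!)²`.
-/

open MeasureTheory Set Metric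
open scoped ENNReal

section Polar

variable {E : Type*} [NormedAddCommGroup E] [NormedSpace ℝ E] [MeasurableSpace E] [Nontrivial E]
  [FiniteDimensional ℝ E] [BorelSpace E] (μ : Measure E) [μ.IsAddHaarMeasure]

lemma lintegral_fun_norm_addHaar {f : ℝ → ℝ≥0∞} (hf : Measurable f) :
    ∫⁻ x, f ‖x‖ ∂μ = Module.finrank ℝ E * μ (ball 0 1) *
      ∫⁻ y in Ioi (0 : ℝ), ENNReal.ofReal (y ^ (Module.finrank ℝ E - 1)) * f y := by
  calc
    ∫⁻ x, f ‖x‖ ∂μ = ∫⁻ x : ({(0)}ᶜ : Set E), f ‖x.1‖ ∂(μ.comap (↑)) := by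
      rw [lintegral_subtype_comap (measurableSet_singleton _).compl fun x ↦ f ‖x‖,
        restrict_compl_singleton]
    _ = ∫⁻ x, f x.2 ∂μ.toSphere.prod (.volumeIoiPow (Module.finrank ℝ E - 1)) := by
      simpa using μ.measurePreserving_homeomorphUnitSphereProd.lintegral_comp_emb
        (Homeomorph.measurableEmbedding _) (f ∘ Subtype.val ∘ Prod.snd)
    _ = μ.toSphere univ * ∫⁻ x : Ioi (0 : ℝ), f x ∂.volumeIoiPow (Module.finrank ℝ E - 1) := by
      rw [lintegral_prod _ (by fun_prop)]
      simp [mul_comm]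
    _ = _ := by
      rw [Measure.toSphere_apply_univ, Measure.volumeIoiPow,
        lintegral_withDensity_eq_lintegral_mul _
          (measurable_subtype_coe.pow_const _).ennreal_ofReal
          (show Measurable fun x : Ioi (0 : ℝ) ↦ f x from hf.comp measurable_subtype_coe),
        ← lintegral_subtype_comap measurableSet_Ioi]
      simp only [Pi.mul_apply, mul_assoc]

end Polar

lemma lintegral_fun_norm_euclideanSpace_fin_three {f : ℝ → ℝ≥0∞} (hf : Measurable f) :
    ∫⁻ x : EuclideanSpace ℝ (Fin 3), f ‖x‖ =
      ENNReal.ofReal (4 * Real.pi) * ∫⁻ r in Ioi (0 : ℝ), ENNReal.ofReal (r ^ 2) * f r := by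
  have h4π : (3 : ℝ≥0∞) * ENNReal.ofReal (Real.pi * 4 / 3) = ENNReal.ofReal (4 * Real.pi) := by
    rw [← ENNReal.ofReal_ofNat 3, ← ENNReal.ofReal_mul (by norm_num)]
    ring_nf
  simp [lintegral_fun_norm_addHaar volume hf, h4π]

lemma lintegral_fin_succ_cons {E : Type*} [MeasureSpace E] [SigmaFinite (volume : Measure E)]
    {n : ℕ} {F : (Fin (n + 1) → E) → ℝ≥0∞} (hF : Measurable F) :
    ∫⁻ y, F y = ∫⁻ x, ∫⁻ z : Fin n → E, F (Fin.cons x z) := by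
  have e := (volume_preserving_piFinSuccAbove (fun _ : Fin (n + 1) ↦ E) 0).symm
  rw [← e.lintegral_comp_emb (MeasurableEquiv.measurableEmbedding _), Measure.volume_eq_prod,
    lintegral_prod (fun p ↦ F ((MeasurableEquiv.piFinSuccAbove (fun _ ↦ E) 0).symm p))
      (hF.comp (MeasurableEquiv.measurable _)).aemeasurable]
  simp [MeasurableEquiv.piFinSuccAbove_symm_apply, Fin.insertNthEquiv]

lemma integral_mul_sub_rpow {t β : ℝ} (ht : 0 ≤ t) (hβ : 0 ≤ β) :
    ∫ r in (0 : ℝ)..t, r * (t - r) ^ β = t ^ (β + 2) / ((β + 1) * (β + 2)) := by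
  have hsub : ∫ r in (0 : ℝ)..t, r * (t - r) ^ β =
      ∫ u in (0 : ℝ)..t, (t * u ^ β - u ^ (β + 1)) := by
    have := intervalIntegral.integral_comp_sub_left (fun u ↦ (t - u) * u ^ β) (a := 0) (b := t) t
    simp only [sub_sub_cancel, sub_self, sub_zero] at this
    rw [this]
    refine intervalIntegral.integral_congr fun u hu ↦ ?_
    rw [uIcc_of_le ht] at hu
    simp only [Real.rpow_add_one' hu.1 (y := β) (by linarith)]
    ring
  have hrpow : ∀ {γ : ℝ}, 0 ≤ γ → IntervalIntegrable (fun u : ℝ ↦ u ^ γ) volume 0 t :=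
    fun hγ ↦ intervalIntegral.intervalIntegrable_rpow' (by linarith)
  rw [hsub, intervalIntegral.integral_sub ((hrpow hβ).const_mul t) (hrpow (by linarith)),
    intervalIntegral.integral_const_mul,
    integral_rpow (Or.inl (by linarith)), integral_rpow (Or.inl (by linarith)),
    Real.zero_rpow (by linarith), Real.zero_rpow (by linarith), show β + 1 + 1 = β + 2 by ring]
  have h : t ^ (β + 2) = t ^ (β + 1) * t := by rw [← Real.rpow_add_one' ht (by linarith)]; ring_nf
  rw [h]
  field_simp
  ring

lemma lintegral_Ioc_mul_sub_rpow {t β : ℝ} (ht : 0 ≤ t) (hβ : 0 ≤ β) :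
    ∫⁻ r in Ioc 0 t, ENNReal.ofReal (r * (t - r) ^ β) =
      ENNReal.ofReal (t ^ (β + 2) / ((β + 1) * (β + 2))) := by
  have hcont : Continuous fun r : ℝ ↦ r * (t - r) ^ β := by
    fun_prop (disch := exact Or.inr hβ)
  have hnonneg : 0 ≤ᵐ[volume.restrict (Ioc 0 t)] fun r ↦ r * (t - r) ^ β := by
    filter_upwards [ae_restrict_mem measurableSet_Ioc] with r hr
    exact mul_nonneg hr.1.le (Real.rpow_nonneg (sub_nonneg.2 hr.2) β)
  rw [← ofReal_integral_eq_lintegral_ofReal hcont.integrableOn_Ioc hnonneg,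
    ← intervalIntegral.integral_of_le ht, integral_mul_sub_rpow ht hβ]

section Simplex

variable (E : Type*) [NormedAddCommGroup E] [MeasureSpace E]

noncomputable def simplexIntegral (μ : ℝ) (n : ℕ) (t : ℝ) : ℝ≥0∞ :=
  ∫⁻ y : Fin n → E in {y | ∑ i, ‖y i‖ ≤ t}, ENNReal.ofReal (∏ i, ‖y i‖ ^ (μ - 1))

variable {E}

lemma simplexIntegral_of_neg (μ : ℝ) (n : ℕ) {t : ℝ} (ht : t < 0) :
    simplexIntegral E μ n t = 0 := by
  have : {y : Fin n → E | ∑ i, ‖y i‖ ≤ t} = ∅ :=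
    eq_empty_of_forall_notMem fun y hy ↦
      (ht.trans_le (Finset.sum_nonneg fun i _ ↦ norm_nonneg (y i))).not_ge hy
  simp [simplexIntegral, this]

lemma simplexIntegral_mono (μ : ℝ) (n : ℕ) : Monotone (simplexIntegral E μ n) :=
  fun _ _ hst ↦ lintegral_mono_set fun _ hy ↦ le_trans hy hst

lemma simplexIntegral_zero_le_one (μ t : ℝ) : simplexIntegral E μ 0 t ≤ 1 := by
  refine (setLIntegral_le_lintegral _ _).trans ?_
  simp [volume_pi]

lemma simplexIntegral_succ [SigmaFinite (volume : Measure E)] [OpensMeasurableSpace E]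
    (μ : ℝ) (n : ℕ) (t : ℝ) :
    simplexIntegral E μ (n + 1) t =
      ∫⁻ x : E, ENNReal.ofReal (‖x‖ ^ (μ - 1)) * simplexIntegral E μ n (t - ‖x‖) := by
  have hS : ∀ (m : ℕ) (s : ℝ), MeasurableSet {y : Fin m → E | ∑ i, ‖y i‖ ≤ s} := fun m s ↦
    measurableSet_le (by fun_prop) measurable_const
  have hF : Measurable fun y : Fin (n + 1) → E ↦ ENNReal.ofReal (∏ i, ‖y i‖ ^ (μ - 1)) := by
    fun_prop
  simp only [simplexIntegral]
  rw [← lintegral_indicator (hS _ t), lintegral_fin_succ_cons (hF.indicator (hS _ t))]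
  refine lintegral_congr fun x ↦ ?_
  rw [← lintegral_const_mul' _ _ ENNReal.ofReal_ne_top, ← lintegral_indicator (hS _ _)]
  refine lintegral_congr fun z ↦ ?_
  simp only [indicator_apply, mem_ofPred_eq, Fin.sum_univ_succ, Fin.prod_univ_succ,
    Fin.cons_zero, Fin.cons_succ, le_sub_iff_add_le']
  split_ifs
  · exact ENNReal.ofReal_mul (by positivity)
  · rfl

end Simplex

local notation "ℝ³" => EuclideanSpace ℝ (Fin 3)

lemma simplexIntegral_succ_le {μ C β : ℝ} (hμ : 0 ≤ μ) (hC : 0 ≤ C) (hβ : 0 ≤ β) {n : ℕ}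
    (h : ∀ s, 0 ≤ s → simplexIntegral ℝ³ μ n s ≤ ENNReal.ofReal (C * s ^ β))
    {t : ℝ} (ht : 0 ≤ t) :
    simplexIntegral ℝ³ μ (n + 1) t ≤
      ENNReal.ofReal (4 * Real.pi * C / ((β + 1) * (β + 2)) * t ^ (β + 2 + μ)) := by
  set I := simplexIntegral ℝ³ μ n
  have hI : Measurable fun r ↦ ENNReal.ofReal (r ^ (μ - 1)) * I (t - r) :=
    (by fun_prop : Measurable fun r : ℝ ↦ ENNReal.ofReal (r ^ (μ - 1))).mul
      ((simplexIntegral_mono μ n).comp_antitone fun _ _ h ↦ sub_le_sub_left h t).measurable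
  have hpt : ∀ r ∈ Ioi (0 : ℝ),
      ENNReal.ofReal (r ^ 2) * (ENNReal.ofReal (r ^ (μ - 1)) * I (t - r)) ≤ (Iic t).indicator
        (fun r ↦ ENNReal.ofReal (C * t ^ μ) * ENNReal.ofReal (r * (t - r) ^ β)) r := by
    intro r (hr : 0 < r)
    rcases le_or_gt r t with hrt | hrt
    · rw [indicator_of_mem (mem_Iic.2 hrt), ← ENNReal.ofReal_mul (by positivity)]
      calc ENNReal.ofReal (r ^ 2) * (ENNReal.ofReal (r ^ (μ - 1)) * I (t - r))
          ≤ ENNReal.ofReal (r ^ 2) * (ENNReal.ofReal (r ^ (μ - 1)) *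
              ENNReal.ofReal (C * (t - r) ^ β)) := by gcongr; exact h _ (sub_nonneg.2 hrt)
        _ = ENNReal.ofReal (r ^ μ * C * (r * (t - r) ^ β)) := by
          rw [← ENNReal.ofReal_mul (by positivity), ← ENNReal.ofReal_mul (by positivity)]
          have hpow : r ^ 2 * r ^ (μ - 1) = r ^ μ * r := by
            rw [Real.rpow_sub hr, Real.rpow_one]
            field_simp
          congr 1
          linear_combination C * (t - r) ^ β * hpow
        _ ≤ ENNReal.ofReal (C * t ^ μ * (r * (t - r) ^ β)) := by
          gcongr ENNReal.ofReal ?_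
          have hnonneg : 0 ≤ C * (r * (t - r) ^ β) :=
            mul_nonneg hC (mul_nonneg hr.le (Real.rpow_nonneg (sub_nonneg.2 hrt) β))
          linear_combination mul_le_mul_of_nonneg_right (Real.rpow_le_rpow hr.le hrt hμ) hnonneg
    · simp [I, simplexIntegral_of_neg μ n (sub_neg.2 hrt)]
  calc simplexIntegral ℝ³ μ (n + 1) t
      = ∫⁻ x : ℝ³, ENNReal.ofReal (‖x‖ ^ (μ - 1)) * I (t - ‖x‖) := simplexIntegral_succ μ n t
    _ = ENNReal.ofReal (4 * Real.pi) *
          ∫⁻ r in Ioi 0, ENNReal.ofReal (r ^ 2) * (ENNReal.ofReal (r ^ (μ - 1)) * I (t - r)) :=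
        lintegral_fun_norm_euclideanSpace_fin_three hI
    _ ≤ ENNReal.ofReal (4 * Real.pi) * ∫⁻ r in Ioi 0, (Iic t).indicator
          (fun r ↦ ENNReal.ofReal (C * t ^ μ) * ENNReal.ofReal (r * (t - r) ^ β)) r :=
        mul_le_mul_right (setLIntegral_mono' measurableSet_Ioi hpt) _
    _ = ENNReal.ofReal (4 * Real.pi) * (ENNReal.ofReal (C * t ^ μ) *
          ENNReal.ofReal (t ^ (β + 2) / ((β + 1) * (β + 2)))) := by
        rw [lintegral_indicator measurableSet_Iic, Measure.restrict_restrict measurableSet_Iic,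
          Iic_inter_Ioi, lintegral_const_mul' _ _ ENNReal.ofReal_ne_top,
          lintegral_Ioc_mul_sub_rpow ht hβ]
    _ = _ := by
        rw [← ENNReal.ofReal_mul (by positivity), ← ENNReal.ofReal_mul (by positivity),
          Real.rpow_add' ht (y := β + 2) (z := μ) (by linarith)]
        ring_nf

lemma pow_div_factorial_sq_div_le {a β : ℝ} (ha : 0 ≤ a) {n : ℕ} (hβ : (n : ℝ) ≤ β) :
    a * (a ^ n / (n.factorial : ℝ) ^ 2) / ((β + 1) * (β + 2)) ≤
      a ^ (n + 1) / ((n + 1).factorial : ℝ) ^ 2 := by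
  have hsq : ((n : ℝ) + 1) ^ 2 ≤ (β + 1) * (β + 2) := by nlinarith
  calc a * (a ^ n / (n.factorial : ℝ) ^ 2) / ((β + 1) * (β + 2))
      ≤ a * (a ^ n / (n.factorial : ℝ) ^ 2) / ((n : ℝ) + 1) ^ 2 :=
        div_le_div_of_nonneg_left (by positivity) (by positivity) hsq
    _ = a ^ (n + 1) / ((n + 1).factorial : ℝ) ^ 2 := by
        rw [Nat.factorial_succ]
        push_cast
        field_simp
        ring

theorem simplexIntegral_le {μ : ℝ} (hμ : 0 ≤ μ) (n : ℕ) {t : ℝ} (ht : 0 ≤ t) :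
    simplexIntegral ℝ³ μ n t ≤
      ENNReal.ofReal ((4 * Real.pi) ^ n * t ^ ((2 + μ) * n) / (n.factorial : ℝ) ^ 2) := by
  induction n generalizing t with
  | zero => simpa using simplexIntegral_zero_le_one μ t
  | succ n ih =>
    have ih' : ∀ s, 0 ≤ s → simplexIntegral ℝ³ μ n s ≤
        ENNReal.ofReal ((4 * Real.pi) ^ n / (n.factorial : ℝ) ^ 2 * s ^ ((2 + μ) * n)) :=
      fun s hs ↦ (ih hs).trans_eq (by rw [mul_div_right_comm])
    refine (simplexIntegral_succ_le hμ (by positivity) (by positivity) ih' ht).trans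
      (ENNReal.ofReal_le_ofReal ?_)
    rw [show (2 + μ) * n + 2 + μ = (2 + μ) * ↑(n + 1) by push_cast; ring,
      mul_div_right_comm ((4 * Real.pi) ^ (n + 1))]
    exact mul_le_mul_of_nonneg_right (pow_div_factorial_sq_div_le (by positivity) (by nlinarith))
      (by positivity)

theorem simplex_integral_estimate_general
    (μ ρ : ℝ) (M : ℕ)
    (hμ : μ ∈ Set.Ioo (0 : ℝ) 1) (hρ : 0 < ρ) :
    (∫ y : Fin M → EuclideanSpace ℝ (Fin 3) in {y | ∑ i, ‖y i‖ ≤ ρ},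
        ∏ i, ‖y i‖ ^ (μ - 1)) ≤
      (4 * Real.pi) ^ M * ρ ^ ((2 + μ) * (M : ℝ)) / (Nat.factorial M : ℝ) ^ 2 := by
  have hmeas : Measurable fun y : Fin M → ℝ³ ↦ ∏ i, ‖y i‖ ^ (μ - 1) := by fun_prop
  rw [integral_eq_lintegral_of_nonneg_ae (.of_forall fun y ↦ by positivity)
    hmeas.aestronglyMeasurable]
  exact ENNReal.toReal_le_of_le_ofReal (by positivity) (simplexIntegral_le hμ.1.le M hρ.le)

/-- (Simplex integral estimate.)  For `μ ∈ (0,1)`, `ρ > 0` and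
`M ≥ 1`, the integral of `∏ |yⁱ|^{μ-1}` over the simplex
`{y ∈ (ℝ³)^M : Σ|yⁱ| ≤ ρ}` is at most `(4π)^M ρ^{(2+μ)M} / (M!)²`. -/
theorem simplex_integral_estimate
    (μ ρ : ℝ) (M : ℕ)
    (hμ : μ ∈ Set.Ioo (0 : ℝ) 1) (hρ : 0 < ρ) (hM : 1 ≤ M) :
    (∫ y : Fin M → EuclideanSpace ℝ (Fin 3) in {y | ∑ i, ‖y i‖ ≤ ρ},
        ∏ i, ‖y i‖ ^ (μ - 1)) ≤
      (4 * Real.pi) ^ M * ρ ^ ((2 + μ) * (M : ℝ)) / (Nat.factorial M : ℝ) ^ 2 :=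
  simplex_integral_estimate_general μ ρ M hμ hρ
end
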